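/- Let χ be an invertible element of O(G)* with χ(1) = 1, and let J, L be Hopf 2-cocycles for G. Then χ : ₗO(G)ⱼ → ℂ is an algebra homomorphism if and only if L = J^χ := (χ ∘ m) * J * (χ⁻¹ ⊗ χ⁻¹), where ₗO(G)ⱼ is the vector space O(G) with multiplication a·b = Σ L⁻¹(a₁,b₁) a₂b₂ J(a₃,b₃). -/

import Mathlib

open TensorProduct

noncomputable section

/-- Convolution product of two `ℂ`-valued functionals on a `ℂ`-coalgebra. -/
def conv {C : Type} [AddCommGroup C] [Module ℂ C] [Coalgebra ℂ C]
    (f g : C →ₗ[ℂ] ℂ) : C →ₗ[ℂ] ℂ :=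
  LinearMap.mul' ℂ ℂ ∘ₗ TensorProduct.map f g ∘ₗ Coalgebra.comul

variable {H : Type} [CommRing H] [HopfAlgebra ℂ H]

/-- `a ⊗ b ⊗ c ↦ Σ J(a₁b₁ ⊗ c) J(a₂ ⊗ b₂)`. -/
def cocycleLHS (J : H ⊗[ℂ] H →ₗ[ℂ] ℂ) : (H ⊗[ℂ] H) ⊗[ℂ] H →ₗ[ℂ] ℂ :=
  conv (J ∘ₗ TensorProduct.map (LinearMap.mul' ℂ H) LinearMap.id)
    (LinearMap.mul' ℂ ℂ ∘ₗ TensorProduct.map J Coalgebra.counit)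

/-- `a ⊗ b ⊗ c ↦ Σ J(a ⊗ b₁c₁) J(b₂ ⊗ c₂)`. -/
def cocycleRHS (J : H ⊗[ℂ] H →ₗ[ℂ] ℂ) : (H ⊗[ℂ] H) ⊗[ℂ] H →ₗ[ℂ] ℂ :=
  conv (J ∘ₗ TensorProduct.map LinearMap.id (LinearMap.mul' ℂ H)
        ∘ₗ (TensorProduct.assoc ℂ H H H).toLinearMap)
    (LinearMap.mul' ℂ ℂ ∘ₗ TensorProduct.map Coalgebra.counit J
        ∘ₗ (TensorProduct.assoc ℂ H H H).toLinearMap)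

/-- A Hopf 2-cocycle for `H`: a convolution-invertible functional on `H ⊗ H` satisfying
`Σ J(a₁b₁, c) J(a₂, b₂) = Σ J(a, b₁c₁) J(b₂, c₂)` and `J(a,1) = ε(a) = J(1,a)`. -/
structure IsHopf2Cocycle (J : H ⊗[ℂ] H →ₗ[ℂ] ℂ) : Prop where
  invertible : ∃ J' : H ⊗[ℂ] H →ₗ[ℂ] ℂ,
    conv J J' = Coalgebra.counit ∧ conv J' J = Coalgebra.counit
  cocycle : cocycleLHS J = cocycleRHS J
  norm_right : ∀ a : H, J (a ⊗ₜ[ℂ] (1 : H)) = Coalgebra.counit a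
  norm_left : ∀ a : H, J ((1 : H) ⊗ₜ[ℂ] a) = Coalgebra.counit a


/-- The doubly twisted product of `ₗO(G)ⱼ` : `a ⊗ b ↦ Σ L⁻¹(a₁ ⊗ b₁) a₂b₂ J(a₃ ⊗ b₃)`. -/
def twP (φ ψ : H ⊗[ℂ] H →ₗ[ℂ] ℂ) : H ⊗[ℂ] H →ₗ[ℂ] H :=
  (TensorProduct.lid ℂ H).toLinearMap
    ∘ₗ TensorProduct.map φ
        ((TensorProduct.rid ℂ H).toLinearMap
          ∘ₗ TensorProduct.map (LinearMap.mul' ℂ H) ψ)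
    ∘ₗ TensorProduct.map LinearMap.id Coalgebra.comul
    ∘ₗ Coalgebra.comul

/-!
Applying `χ` to the twisted product `m_{L,J}` gives, in the convolution algebra of `H ⊗ H`,
`χ ∘ m_{L,J} = L⁻¹ * (χ ∘ m) * J`, and `χ` is multiplicative on `ₗO(G)ⱼ` exactly when this
functional equals `χ ⊗ χ`. The latter is convolution-invertible with inverse `χ⁻¹ ⊗ χ⁻¹`, so
the equation `L⁻¹ * (χ ∘ m) * J = χ ⊗ χ` can be solved for `L` in the convolution monoid:
`conv` is definitionally the product of Mathlib's convolution ring `WithConv (C →ₗ[ℂ] ℂ)`,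
where convolution-inverse pairs become units.
-/

open WithConv

section Convolution

variable {C : Type} [AddCommGroup C] [Module ℂ C] [Coalgebra ℂ C]

def IsConvInverse (f g : C →ₗ[ℂ] ℂ) : Prop :=
  conv f g = Coalgebra.counit ∧ conv g f = Coalgebra.counit

lemma ofConv_one_eq_counit : (1 : WithConv (C →ₗ[ℂ] ℂ)).ofConv = Coalgebra.counit := by
  ext; simp

def IsConvInverse.unit {f g : C →ₗ[ℂ] ℂ} (h : IsConvInverse f g) :
    (WithConv (C →ₗ[ℂ] ℂ))ˣ where
  val := toConv f
  inv := toConv g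
  val_inv := ofConv_injective (h.1.trans ofConv_one_eq_counit.symm)
  inv_val := ofConv_injective (h.2.trans ofConv_one_eq_counit.symm)

lemma conv_eq_iff_eq_conv_of_isConvInverse {x x' y t t' : C →ₗ[ℂ] ℂ}
    (hx : IsConvInverse x x') (ht : IsConvInverse t t') :
    conv x' y = t ↔ x = conv y t' := by
  set u := hx.unit
  set v := ht.unit
  calc conv x' y = t ↔ ↑u⁻¹ * toConv y = ↑v := toConv_injective.eq_iff.symm
    _ ↔ toConv y = u * v := u.inv_mul_eq_iff_eq_mul
    _ ↔ toConv y * ↑v⁻¹ = u := v.mul_inv_eq_iff_eq_mul.symm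
    _ ↔ x = conv y t' := eq_comm.trans toConv_injective.eq_iff

end Convolution

section TensorProduct

variable {B D : Type} [AddCommGroup B] [Module ℂ B] [Coalgebra ℂ B]
  [AddCommGroup D] [Module ℂ D] [Coalgebra ℂ D]

lemma conv_mul'_comp_map (f g : B →ₗ[ℂ] ℂ) (f' g' : D →ₗ[ℂ] ℂ) :
    conv (LinearMap.mul' ℂ ℂ ∘ₗ map f f') (LinearMap.mul' ℂ ℂ ∘ₗ map g g')
      = LinearMap.mul' ℂ ℂ ∘ₗ map (conv f g) (conv f' g') := by
  have hdistrib := LinearMap.algHom_comp_convMul_distrib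
    (Algebra.TensorProduct.lmul' ℂ (S := ℂ)) (toConv (map f f')) (toConv (map g g'))
  rw [map_convMul_map] at hdistrib
  exact hdistrib.symm

lemma mul'_comp_map_counit :
    LinearMap.mul' ℂ ℂ ∘ₗ map Coalgebra.counit Coalgebra.counit
      = (Coalgebra.counit : B ⊗[ℂ] D →ₗ[ℂ] ℂ) := by
  ext; simp [mul_comm]

lemma IsConvInverse.mul'_comp_map {f g : B →ₗ[ℂ] ℂ} {f' g' : D →ₗ[ℂ] ℂ}
    (h : IsConvInverse f g) (h' : IsConvInverse f' g') :
    IsConvInverse (LinearMap.mul' ℂ ℂ ∘ₗ map f f') (LinearMap.mul' ℂ ℂ ∘ₗ map g g') :=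
  ⟨by rw [conv_mul'_comp_map, h.1, h'.1, mul'_comp_map_counit],
    by rw [conv_mul'_comp_map, h.2, h'.2, mul'_comp_map_counit]⟩

end TensorProduct

section Functionals

variable {R M N P : Type*} [CommSemiring R] [AddCommMonoid M] [Module R M]
  [AddCommMonoid N] [Module R N] [AddCommMonoid P] [Module R P]

lemma forall_tmul_eq_mul_iff (f : M ⊗[R] N →ₗ[R] R) (g : M →ₗ[R] R) (h : N →ₗ[R] R) :
    (∀ a b, f (a ⊗ₜ b) = g a * h b) ↔ f = LinearMap.mul' R R ∘ₗ map g h :=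
  ⟨fun hf => ext' fun a b => by simpa using hf a b, fun hf a b => by simp [hf]⟩

lemma comp_lid_comp_map (χ : M →ₗ[R] R) (f : N →ₗ[R] R) (g : P →ₗ[R] M) :
    (χ ∘ₗ (TensorProduct.lid R M).toLinearMap) ∘ₗ map f g
      = LinearMap.mul' R R ∘ₗ map f (χ ∘ₗ g) := by
  ext; simp

lemma comp_rid_comp_map (χ : M →ₗ[R] R) (f : N →ₗ[R] R) (g : P →ₗ[R] M) :
    (χ ∘ₗ (TensorProduct.rid R M).toLinearMap) ∘ₗ map g f
      = LinearMap.mul' R R ∘ₗ map (χ ∘ₗ g) f := by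
  ext; simp [mul_comm]

end Functionals

lemma comp_twP (χ : H →ₗ[ℂ] ℂ) (φ ψ : H ⊗[ℂ] H →ₗ[ℂ] ℂ) :
    χ ∘ₗ twP φ ψ = conv φ (conv (χ ∘ₗ LinearMap.mul' ℂ H) ψ) := by
  simp only [twP, conv, ← LinearMap.comp_assoc, comp_lid_comp_map]
  rw [comp_rid_comp_map, LinearMap.comp_assoc _ _ (LinearMap.mul' ℂ ℂ), ← map_comp,
    LinearMap.comp_id]

theorem character_of_twist_iff_gauge (J L Linv : H ⊗[ℂ] H →ₗ[ℂ] ℂ)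
    (hLinv : conv L Linv = Coalgebra.counit ∧ conv Linv L = Coalgebra.counit)
    (χ χinv : H →ₗ[ℂ] ℂ)
    (hχ : conv χ χinv = Coalgebra.counit ∧ conv χinv χ = Coalgebra.counit) :
    (∀ a b : H, χ (twP Linv J (a ⊗ₜ[ℂ] b)) = χ a * χ b)
    ↔ L = conv (conv (χ ∘ₗ LinearMap.mul' ℂ H) J)
          (LinearMap.mul' ℂ ℂ ∘ₗ TensorProduct.map χinv χinv) := by
  have hχχ := IsConvInverse.mul'_comp_map hχ hχ
  calc (∀ a b : H, χ (twP Linv J (a ⊗ₜ[ℂ] b)) = χ a * χ b)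
      ↔ χ ∘ₗ twP Linv J = LinearMap.mul' ℂ ℂ ∘ₗ map χ χ :=
        forall_tmul_eq_mul_iff (χ ∘ₗ twP Linv J) χ χ
    _ ↔ conv Linv (conv (χ ∘ₗ LinearMap.mul' ℂ H) J) = LinearMap.mul' ℂ ℂ ∘ₗ map χ χ := by
      rw [comp_twP]
    _ ↔ _ := conv_eq_iff_eq_conv_of_isConvInverse hLinv hχχ
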